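/- Let H_b ∈ ℂ^{N_r×N_t} and H_e ∈ ℂ^{N_e×N_t} be complex matrices such that Δ := H_bᴴH_b − H_eᴴH_e is positive semidefinite, let X ∈ ℂ^{N_t×N_t} be Hermitian positive semidefinite, and let Y ∈ ℂ^{N_t×N_t} be Hermitian positive semidefinite. If the 2×2 block matrix [[I + Δ^{1/2} X Δ^{1/2} − Y, Δ^{1/2} X H_eᴴ], [H_e X Δ^{1/2}, I + H_e X H_eᴴ]] is positive semidefinite, then det Y ≤ det(I + H_b X H_bᴴ) / det(I + H_e X H_eᴴ). -/

import Mathlib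

/-!
Since `1 + H_e X H_eᴴ` is positive definite, the linear matrix inequality says that `Y ≤ K` in the
Loewner order, where `K` is the Schur complement of that block in the block matrix with `Y = 0`;
the determinant is monotone on positive semidefinite matrices, so `det Y ≤ det K`. The block matrix with `Y = 0` is `1 + G X Gᴴ` for the stacked
matrix `G = [Δ^{1/2}; H_e]`, whose Gram matrix `Gᴴ G = Δ + H_eᴴ H_e` is `H_bᴴ H_b`; by Sylvester's
determinant identity its determinant is therefore `det (1 + H_b X H_bᴴ)`, while the Schur
complement formula gives `det (1 + H_e X H_eᴴ) * det K`.
-/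

open Matrix
open scoped ComplexOrder

/-- The square root of a positive semidefinite matrix, as `Matrix.PosSemidef.sqrt` was defined
in Mathlib (December 2024); the definition has since been removed from Mathlib. -/
noncomputable def Matrix.PosSemidef.sqrt {n : Type*} [Fintype n] [DecidableEq n] {𝕜 : Type*} [RCLike 𝕜]
    {A : Matrix n n 𝕜} (hA : A.PosSemidef) : Matrix n n 𝕜 :=
  hA.1.eigenvectorUnitary.1 * diagonal ((↑) ∘ (√·) ∘ hA.1.eigenvalues) *
    (star hA.1.eigenvectorUnitary : Matrix n n 𝕜)

open scoped MatrixOrder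

namespace Matrix

variable {α k l m n : Type*}

theorem fromBlocks_one_add_mul_mul_conjTranspose [Semiring α] [Star α] [Fintype n]
    [DecidableEq k] [DecidableEq l] (G : Matrix k n α) (F : Matrix l n α) (X : Matrix n n α) :
    fromBlocks (1 + G * X * Gᴴ) (G * X * Fᴴ) (F * X * Gᴴ) (1 + F * X * Fᴴ) =
      1 + fromRows G F * X * (fromRows G F)ᴴ := by
  rw [conjTranspose_fromRows_eq_fromCols_conjTranspose, fromRows_mul, fromRows_mul_fromCols,
    ← fromBlocks_one, fromBlocks_add, zero_add, zero_add]

theorem det_one_add_mul_mul_conjTranspose_congr [CommRing α] [Star α] [Fintype k] [Fintype l]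
    [Fintype n] [DecidableEq k] [DecidableEq l] [DecidableEq n] {H : Matrix k n α}
    {K : Matrix l n α} (X : Matrix n n α) (h : Hᴴ * H = Kᴴ * K) :
    (1 + H * X * Hᴴ).det = (1 + K * X * Kᴴ).det := by
  rw [Matrix.mul_assoc, det_one_add_mul_comm, Matrix.mul_assoc, h, ← Matrix.mul_assoc,
    det_one_add_mul_comm, Matrix.mul_assoc]

variable [Fintype n] [DecidableEq n] {𝕜 : Type*} [RCLike 𝕜]

lemma PosSemidef.sqrt_eq_cfcSqrt {A : Matrix n n 𝕜} (hA : A.PosSemidef) :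
    hA.sqrt = CFC.sqrt A := by
  rw [CFC.sqrt_eq_real_sqrt A hA.nonneg, cfcₙ_eq_cfc, hA.1.cfc_eq]
  rfl

lemma IsHermitian.det_cfc {A : Matrix n n 𝕜} (hA : A.IsHermitian) (f : ℝ → ℝ) :
    (cfc f A).det = ∏ i, (f (hA.eigenvalues i) : 𝕜) := by
  rw [hA.cfc_eq]
  simp [IsHermitian.cfc, -Unitary.conjStarAlgAut_apply]

lemma PosSemidef.one_le_det_one_add {M : Matrix n n 𝕜} (hM : M.PosSemidef) :
    1 ≤ (1 + M).det := by
  have h : 1 + M = cfc (fun x : ℝ ↦ 1 + x) M := by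
    rw [cfc_const_add (1 : ℝ) (fun x ↦ x) M, cfc_id' ℝ M, algebraMap_eq_diagonal]
    simp
  rw [h, hM.1.det_cfc]
  refine Finset.one_le_prod fun i _ ↦ ?_
  rw [← RCLike.ofReal_one, RCLike.ofReal_le_ofReal]
  linarith [hM.eigenvalues_nonneg i]

lemma PosSemidef.det_le_det {A B : Matrix n n 𝕜} (hA : A.PosSemidef) (hAB : (B - A).PosSemidef) :
    A.det ≤ B.det := by
  by_cases hA0 : A.det = 0
  · rw [hA0]
    simpa using (hA.add hAB).det_nonneg
  -- Writing `B - A = Rᴴ R`, Sylvester's identity gives `det B = det A * det (1 + R A⁻¹ Rᴴ)`.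
  obtain ⟨R, hR⟩ := CStarAlgebra.nonneg_iff_eq_star_mul_self.mp hAB.nonneg
  have hB : B = A * (1 + A⁻¹ * Rᴴ * R) := by
    rw [mul_add, mul_one, Matrix.mul_assoc, mul_nonsing_inv_cancel_left _ _ (Ne.isUnit hA0),
      ← star_eq_conjTranspose, ← hR, add_sub_cancel]
  calc A.det = A.det * 1 := (mul_one _).symm
    _ ≤ A.det * (1 + R * A⁻¹ * Rᴴ).det :=
      mul_le_mul_of_nonneg_left (hA.inv.mul_mul_conjTranspose_same R).one_le_det_one_add
        hA.det_nonneg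
    _ = B.det := by
      rw [hB, det_mul, Matrix.mul_assoc, det_one_add_mul_comm, Matrix.mul_assoc]

lemma det_mul_det_le_det_fromBlocks [Fintype m] [DecidableEq m]
    (A Y : Matrix m m 𝕜) (B : Matrix m n 𝕜) {D : Matrix n n 𝕜} (hD : D.PosDef)
    (hY : Y.PosSemidef) (h : (fromBlocks (A - Y) B Bᴴ D).PosSemidef) :
    D.det * Y.det ≤ (fromBlocks A B Bᴴ D).det := by
  have := hD.isUnit.invertible
  have hK : (A - B * D⁻¹ * Bᴴ - Y).PosSemidef := by
    rw [sub_right_comm]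
    exact (PosDef.fromBlocks₂₂ _ _ hD).mp h
  rw [det_fromBlocks₂₂, invOf_eq_nonsing_inv]
  exact mul_le_mul_of_nonneg_left (hY.det_le_det hK) hD.det_pos.le

end Matrix

/-- one direction of Lemma 1 of the paper: feasibility of the
linear matrix inequality implies `det Y` is at most the secrecy-rate
determinant ratio. -/
theorem stmt_3 {Nr Nt Ne : ℕ}
    (Hb : Matrix (Fin Nr) (Fin Nt) ℂ) (He : Matrix (Fin Ne) (Fin Nt) ℂ)
    (X : Matrix (Fin Nt) (Fin Nt) ℂ) (hX : X.PosSemidef)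
    (hΔ : (Hbᴴ * Hb - Heᴴ * He).PosSemidef)
    (Y : Matrix (Fin Nt) (Fin Nt) ℂ) (hY : Y.PosSemidef)
    (hblk : (Matrix.fromBlocks
        (1 + hΔ.sqrt * X * hΔ.sqrt - Y) (hΔ.sqrt * X * Heᴴ)
        (He * X * hΔ.sqrt) (1 + He * X * Heᴴ)).PosSemidef) :
    Y.det ≤ (1 + Hb * X * Hbᴴ).det / (1 + He * X * Heᴴ).det := by
  rw [hΔ.sqrt_eq_cfcSqrt] at hblk
  set S := CFC.sqrt (Hbᴴ * Hb - Heᴴ * He)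
  have hS : Sᴴ = S := (CFC.sqrt_nonneg _).posSemidef.1
  have hD : (1 + He * X * Heᴴ).PosDef :=
    PosDef.one.add_posSemidef (hX.mul_mul_conjTranspose_same He)
  have hB : (S * X * Heᴴ)ᴴ = He * X * S := by
    rw [conjTranspose_mul, conjTranspose_mul, conjTranspose_conjTranspose, hX.1, hS,
      Matrix.mul_assoc]
  have hgram : (fromRows S He)ᴴ * fromRows S He = Hbᴴ * Hb := by
    rw [conjTranspose_fromRows_eq_fromCols_conjTranspose, fromCols_mul_fromRows, hS,
      CFC.sqrt_mul_sqrt_self _ hΔ.nonneg, sub_add_cancel]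
  have hblock := fromBlocks_one_add_mul_mul_conjTranspose S He X
  rw [hS] at hblock
  have hdet := det_mul_det_le_det_fromBlocks _ _ _ hD hY (hB ▸ hblk)
  rw [hB, hblock, det_one_add_mul_mul_conjTranspose_congr X hgram] at hdet
  rwa [le_div_iff₀ hD.det_pos, mul_comm]
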